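/- Let G = T^d ⋊ S_d, realized as d×d matrices, be the compact group of all unitary generalized permutation matrices (diagonal unitary matrices with entries in the unit circle times permutation matrices), a subgroup of U_d. Then G has the quadrature property: for all 0 ≤ k ≤ d and p : [k] → [d], ∑_{σ∈S_k} sgn(σ) ∫_G ∏_{i=1}^k u_{i p(i)} conj(u_{σ(i) p(i)}) dU = (d-k)!/d! if p is injective and 0 otherwise. -/

import Mathlib

open Finset MeasureTheory Complex

section Cnt
open Equiv

-- card of permutations fixing the low part
lemma card_fix_low {d k : ℕ} (hk : k ≤ d) :
    (Finset.univ.filter fun π : Perm (Fin d) => ∀ x : Fin d, x.val < k → π x = x).card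
      = Nat.factorial (d - k) := by
  classical
  rw [← Fintype.card_subtype]
  have e1 : {π : Perm (Fin d) // ∀ x : Fin d, x.val < k → π x = x}
      ≃ {f : Perm (Fin d) // ∀ a : Fin d, ¬ (k ≤ a.val) → f a = a} :=
    Equiv.subtypeEquiv (Equiv.refl _) (by intro π; simp [not_le])
  have e2 := (Equiv.Perm.subtypeEquivSubtypePerm (fun a : Fin d => k ≤ a.val)).symm
  have e3 : {x : Fin d // k ≤ x.val} ≃ Fin (d - k) :=
    { toFun := fun x => ⟨x.1.1 - k, by have h1 := x.1.2; have h2 := x.2; omega⟩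
      invFun := fun i => ⟨⟨i.1 + k, by omega⟩, by simp⟩
      left_inv := by rintro ⟨⟨x, hx⟩, h⟩; simp at h ⊢; omega
      right_inv := by rintro ⟨i, hi⟩; simp }
  rw [Fintype.card_congr (e1.trans (e2.trans (Equiv.permCongr e3)))]
  simp [Fintype.card_perm]

lemma exists_tau {d k : ℕ} (hk : k ≤ d) (p : Fin k → Fin d) (hp : Function.Injective p) :
    ∃ τ₀ : Perm (Fin d), ∀ i, τ₀ (p i) = Fin.castLE hk i := by
  classical
  rcases Nat.eq_zero_or_pos k with rfl | hkpos
  · exact ⟨1, fun i => i.elim0⟩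
  have : Nonempty (Fin k) := ⟨⟨0, hkpos⟩⟩
  set f : Fin d → Fin d := fun x => Fin.castLE hk (Function.invFun p x) with hf
  have hcard : Fintype.card (Fin d) = (Finset.univ : Finset (Fin d)).card := by simp
  have hmt : Set.MapsTo f (Set.range p) (Finset.univ : Finset (Fin d)) := fun x _ => by simp
  have hinj : Set.InjOn f (Set.range p) := by
    rintro x ⟨i, rfl⟩ y ⟨j, rfl⟩ hxy
    have hi : Function.invFun p (p i) = i := Function.leftInverse_invFun hp i
    have hj : Function.invFun p (p j) = j := Function.leftInverse_invFun hp j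
    simp only [hf, hi, hj] at hxy
    exact congrArg p (Fin.castLE_injective hk hxy)
  obtain ⟨g, hg⟩ := Set.MapsTo.exists_equiv_extend_of_card_eq hcard hmt hinj
  refine ⟨g.trans (Equiv.subtypeUnivEquiv Finset.mem_univ), fun i => ?_⟩
  have := hg (p i) ⟨i, rfl⟩
  simp only [Equiv.trans_apply, Equiv.subtypeUnivEquiv_apply]
  rw [this, hf]
  simp [Function.leftInverse_invFun hp i]

lemma card_fix_main {d k : ℕ} (hk : k ≤ d) (p : Fin k → Fin d) (hp : Function.Injective p) :
    (Finset.univ.filter fun τ : Perm (Fin d) => ∀ i, Fin.castLE hk i = τ (p i)).card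
      = Nat.factorial (d - k) := by
  classical
  obtain ⟨τ₀, hτ₀⟩ := exists_tau hk p hp
  rw [← card_fix_low hk]
  apply Finset.card_bij (fun τ _ => τ * τ₀⁻¹)
  · intro τ hτ
    simp only [mem_filter, mem_univ, true_and] at hτ ⊢
    intro x hx
    obtain ⟨i, rfl⟩ : ∃ i : Fin k, Fin.castLE hk i = x := ⟨⟨x.1, hx⟩, rfl⟩
    have h1 : τ₀⁻¹ (Fin.castLE hk i) = p i := by rw [← hτ₀ i, Equiv.Perm.inv_def, Equiv.symm_apply_apply]
    rw [Equiv.Perm.mul_apply, h1, ← hτ i]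
  · intro a ha b hb hab
    exact mul_right_cancel hab
  · intro π hπ
    simp only [mem_filter, mem_univ, true_and] at hπ ⊢
    refine ⟨π * τ₀, ?_, by group⟩
    intro i
    rw [Equiv.Perm.mul_apply, hτ₀ i, hπ _ (by simpa using i.2)]

end Cnt

/-- The unitary generalized permutation matrix `D·P` with diagonal entries
`exp(2πi·θ(i))` on the unit circle and underlying permutation `τ`. -/
noncomputable def circlePermMatrix {d : ℕ} (θ : Fin d → ℝ) (τ : Equiv.Perm (Fin d)) :
    Matrix (Fin d) (Fin d) ℂ :=
  fun i j => if i = τ j then Complex.exp (2 * Real.pi * Complex.I * (θ i : ℂ)) else 0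

lemma exp_mul_conj (x : ℝ) :
    Complex.exp (2 * Real.pi * Complex.I * (x : ℂ)) *
      (starRingEnd ℂ) (Complex.exp (2 * Real.pi * Complex.I * (x : ℂ))) = 1 := by
  rw [← Complex.exp_conj, ← Complex.exp_add]
  have : (2 * Real.pi * Complex.I * (x : ℂ)) +
      (starRingEnd ℂ) (2 * Real.pi * Complex.I * (x : ℂ)) = 0 := by
    simp only [map_mul, Complex.conj_I, Complex.conj_ofReal, map_ofNat]
    ring
  rw [this, Complex.exp_zero]

lemma hvol {d : ℕ} : volume (Set.univ.pi fun _ : Fin d => Set.Ioc (0 : ℝ) 1) = 1 := by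
  rw [volume_pi_pi]
  simp

/-- The group `T^d ⋊ S_d` of all `d × d` unitary generalized permutation matrices, with its
Haar measure (uniform on permutations, normalized Lebesgue on the phases), has the
quadrature property. -/
theorem circlePerm_quadrature {d k : ℕ} (hk : k ≤ d) (p : Fin k → Fin d) :
    ∑ σ : Equiv.Perm (Fin k), (Equiv.Perm.sign σ : ℂ) *
      ((Nat.factorial d : ℂ)⁻¹ *
        ∑ τ : Equiv.Perm (Fin d),
          ∫ θ in (Set.univ.pi fun _ : Fin d => Set.Ioc (0 : ℝ) 1),
            ∏ i : Fin k,
              circlePermMatrix θ τ (Fin.castLE hk i) (p i) *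
                (starRingEnd ℂ) (circlePermMatrix θ τ (Fin.castLE hk (σ i)) (p i)))
      = if Function.Injective p then
          (Nat.factorial (d - k) : ℂ) / (Nat.factorial d : ℂ) else 0 := by
  classical
  rw [Finset.sum_eq_single (1 : Equiv.Perm (Fin k))]
  · -- main term
    have hconst : ∀ (τ : Equiv.Perm (Fin d)) (θ : Fin d → ℝ),
        (∏ i : Fin k, circlePermMatrix θ τ (Fin.castLE hk i) (p i) *
            (starRingEnd ℂ) (circlePermMatrix θ τ (Fin.castLE hk ((1 : Equiv.Perm (Fin k)) i)) (p i)))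
          = if ∀ i : Fin k, Fin.castLE hk i = τ (p i) then 1 else 0 := by
      intro τ θ
      trans (∏ i : Fin k, if Fin.castLE hk i = τ (p i) then (1:ℂ) else 0)
      swap
      · rw [Fintype.prod_boole (M₀ := ℂ) (p := fun i : Fin k => Fin.castLE hk i = τ (p i))]; congr 1
      refine Finset.prod_congr rfl fun i _ => ?_
      simp only [Equiv.Perm.coe_one, id_eq, circlePermMatrix]
      by_cases h : Fin.castLE hk i = τ (p i)
      · simp [h, exp_mul_conj]
      · simp [h]
    simp only [hconst, Equiv.Perm.sign_one, Units.val_one, Int.cast_one, one_mul]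
    have hint : ∀ τ : Equiv.Perm (Fin d),
        (∫ _θ in (Set.univ.pi fun _ : Fin d => Set.Ioc (0 : ℝ) 1),
          (if ∀ i : Fin k, Fin.castLE hk i = τ (p i) then (1:ℂ) else 0))
        = if ∀ i : Fin k, Fin.castLE hk i = τ (p i) then (1:ℂ) else 0 := by
      intro τ
      rw [setIntegral_const, measureReal_def, hvol]
      simp
    simp only [hint, Finset.sum_boole]
    by_cases hp : Function.Injective p
    · rw [if_pos hp, card_fix_main hk p hp]
      rw [div_eq_inv_mul]
    · rw [if_neg hp]
      have : (Finset.univ.filter fun τ : Equiv.Perm (Fin d) =>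
          ∀ i, Fin.castLE hk i = τ (p i)) = ∅ := by
        rw [Finset.filter_eq_empty_iff]
        intro τ _ hτ
        exact hp fun i j hij => Fin.castLE_injective hk (by rw [hτ i, hτ j, hij])
      rw [this]
      simp
  · -- other σ vanish
    intro σ _ hσ
    obtain ⟨i₀, hi₀⟩ : ∃ i, σ i ≠ i := by
      by_contra h
      push_neg at h
      exact hσ (Equiv.ext h)
    have hz : ∀ (τ : Equiv.Perm (Fin d)) (θ : Fin d → ℝ),
        (∏ i : Fin k, circlePermMatrix θ τ (Fin.castLE hk i) (p i) *
            (starRingEnd ℂ) (circlePermMatrix θ τ (Fin.castLE hk (σ i)) (p i))) = 0 := by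
      intro τ θ
      apply Finset.prod_eq_zero (Finset.mem_univ i₀)
      by_cases h : Fin.castLE hk i₀ = τ (p i₀)
      · have h2 : Fin.castLE hk (σ i₀) ≠ τ (p i₀) := fun hc =>
          hi₀ (Fin.castLE_injective hk (hc.trans h.symm))
        simp [circlePermMatrix, h2]
      · simp [circlePermMatrix, h]
    simp only [hz, integral_zero, Finset.sum_const_zero, mul_zero]
  · intro h
    exact absurd (Finset.mem_univ _) h
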